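/- Let ρ_A = ∑_{j=1}^N p_j ρ_A^j be a convex combination of density operators with p_j > 0. Then for any ε ≥ 0, the smooth zero-Rényi entropy satisfies H₀^ε(A)_ρ ≤ max_j H₀^ε(A)_{ρ^j} + log N. -/

import Mathlib

open scoped Classical Kronecker ComplexOrder

noncomputable section

namespace QIT

variable {ι κ γ : Type*} [Fintype ι] [DecidableEq ι] [Fintype κ] [DecidableEq κ]
  [Fintype γ] [DecidableEq γ]

/-- Trace norm `‖A‖₁ = tr √(AᴴA)`. -/
def traceNorm (A : Matrix ι ι ℂ) : ℝ :=
  ((Matrix.posSemidef_conjTranspose_mul_self A).1.eigenvectorUnitary.1 *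
    Matrix.diagonal (((↑) : ℝ → ℂ) ∘ (√·) ∘ (Matrix.posSemidef_conjTranspose_mul_self A).1.eigenvalues) *
    (star (Matrix.posSemidef_conjTranspose_mul_self A).1.eigenvectorUnitary :
      Matrix ι ι ℂ)).trace.re

/-- Matrix square root (of a PSD matrix; junk value `0` otherwise). -/
def msqrt (A : Matrix ι ι ℂ) : Matrix ι ι ℂ :=
  if h : A.PosSemidef then h.1.eigenvectorUnitary.1 *
    Matrix.diagonal (((↑) : ℝ → ℂ) ∘ (√·) ∘ h.1.eigenvalues) *
    (star h.1.eigenvectorUnitary : Matrix ι ι ℂ) else 0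

/-- Fidelity `F(ρ,σ) = ‖√ρ√σ‖₁`. -/
def fidelity (ρ σ : Matrix ι ι ℂ) : ℝ := traceNorm (msqrt ρ * msqrt σ)

/-- Generalized fidelity. -/
def genFid (ρ σ : Matrix ι ι ℂ) : ℝ :=
  fidelity ρ σ + Real.sqrt ((1 - ρ.trace.re) * (1 - σ.trace.re))

/-- Purified distance. -/
def purifiedDist (ρ σ : Matrix ι ι ℂ) : ℝ := Real.sqrt (1 - genFid ρ σ ^ 2)

def IsSubnormalized (ρ : Matrix ι ι ℂ) : Prop := ρ.PosSemidef ∧ ρ.trace.re ≤ 1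

def IsDensity (ρ : Matrix ι ι ℂ) : Prop := ρ.PosSemidef ∧ ρ.trace = 1

/-- Max-relative entropy `D_max(ρ‖σ) = inf {λ : 2^λ σ ≥ ρ}`. -/
def Dmax (ρ σ : Matrix ι ι ℂ) : ℝ :=
  sInf {l : ℝ | ((((2:ℝ) ^ l : ℝ) : ℂ) • σ - ρ).PosSemidef}

/-- Partial trace over the first factor. -/
def ptrace₁ (ρ : Matrix (ι × κ) (ι × κ) ℂ) : Matrix κ κ ℂ :=
  Matrix.of fun (b b' : κ) => ∑ a, ρ (a, b) (a, b')

/-- Partial trace over the second factor. -/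
def ptrace₂ (ρ : Matrix (ι × κ) (ι × κ) ℂ) : Matrix ι ι ℂ :=
  Matrix.of fun (a a' : ι) => ∑ b, ρ (a, b) (a', b)

/-- Max-information `I_max(A:B)_ρ = inf_{σ_B} D_max(ρ_{AB}‖ρ_A ⊗ σ_B)`. -/
def Imax (ρ : Matrix (ι × κ) (ι × κ) ℂ) : ℝ :=
  sInf {x : ℝ | ∃ σ : Matrix κ κ ℂ, IsDensity σ ∧ x = Dmax ρ (ptrace₂ ρ ⊗ₖ σ)}

/-- Conditional min-entropy `H_min(A|B)_ρ = −inf_{σ_B} D_max(ρ_{AB}‖Id_A ⊗ σ_B)`. -/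
def HminCond (ρ : Matrix (ι × κ) (ι × κ) ℂ) : ℝ :=
  - sInf {x : ℝ | ∃ σ : Matrix κ κ ℂ, IsDensity σ ∧ x = Dmax ρ ((1 : Matrix ι ι ℂ) ⊗ₖ σ)}

/-- Largest eigenvalue (operator norm for PSD matrices). -/
def maxEig (ρ : Matrix ι ι ℂ) : ℝ :=
  if h : ρ.IsHermitian then ⨆ i, h.eigenvalues i else 0

/-- Zero-Rényi entropy `H₀ = log rank`. -/
def H0 (ρ : Matrix ι ι ℂ) : ℝ := Real.logb 2 ρ.rank

/-- Min-entropy `H_min = −log ‖ρ‖_∞`. -/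
def Hmin (ρ : Matrix ι ι ℂ) : ℝ := - Real.logb 2 (maxEig ρ)

/-- Max-entropy `H_max = 2 log tr √ρ`. -/
def Hmax (ρ : Matrix ι ι ℂ) : ℝ := 2 * Real.logb 2 (msqrt ρ).trace.re

def smoothH0 (ε : ℝ) (ρ : Matrix ι ι ℂ) : ℝ :=
  sInf {x : ℝ | ∃ σ : Matrix ι ι ℂ, IsSubnormalized σ ∧ purifiedDist σ ρ ≤ ε ∧ x = H0 σ}

def smoothHmax (ε : ℝ) (ρ : Matrix ι ι ℂ) : ℝ :=
  sInf {x : ℝ | ∃ σ : Matrix ι ι ℂ, IsSubnormalized σ ∧ purifiedDist σ ρ ≤ ε ∧ x = Hmax σ}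

def smoothImax (ε : ℝ) (ρ : Matrix (ι × κ) (ι × κ) ℂ) : ℝ :=
  sInf {x : ℝ | ∃ σ : Matrix (ι × κ) (ι × κ) ℂ,
    IsSubnormalized σ ∧ purifiedDist σ ρ ≤ ε ∧ x = Imax σ}


/-!
Pick optimal smoothings `σⱼ` of the `ρⱼ`. The mixture `∑ pⱼ σⱼ` has rank at most
`N · maxⱼ rank σⱼ`, and it stays `ε`-close to `∑ pⱼ ρⱼ` because the fidelity is jointly concave.
Joint concavity comes from the variational formula `F(σ, ρ) = max Re tr (Xᴴ Y)` over
`X Xᴴ ≤ σ`, `Y Yᴴ ≤ ρ` (upper bound via Douglas' lemma, attained through the polar decomposition of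
`√σ √ρ`): stacking optimal pairs `(√pⱼ Xⱼ)ⱼ`, `(√pⱼ Yⱼ)ⱼ` side by side gives a feasible pair for
the mixtures.
-/

end QIT

namespace Matrix

open scoped MatrixOrder

section Rank

variable {m n ι : Type*} [Fintype n] {K : Type*} [Field K]

theorem rank_add_le (A B : Matrix m n K) : (A + B).rank ≤ A.rank + B.rank := by
  have hrange : LinearMap.range (A + B).mulVecLin ≤
      LinearMap.range A.mulVecLin ⊔ LinearMap.range B.mulVecLin := by
    rintro _ ⟨v, rfl⟩
    rw [mulVecLin_add]
    exact Submodule.add_mem_sup ⟨v, rfl⟩ ⟨v, rfl⟩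
  exact (Submodule.finrank_mono hrange).trans (Submodule.finrank_add_le_finrank_add_finrank _ _)

theorem rank_sum_le (s : Finset ι) (A : ι → Matrix m n K) :
    (∑ i ∈ s, A i).rank ≤ ∑ i ∈ s, (A i).rank :=
  Finset.le_sum_of_subadditive rank (rank_zero (R := K)).le rank_add_le s A

theorem rank_smul_le {R : Type*} [DistribSMul R K] [IsScalarTower R K K] [SMulCommClass R K K]
    (c : R) (A : Matrix m n K) : (c • A).rank ≤ A.rank := by
  refine Submodule.finrank_mono ?_
  rintro _ ⟨v, rfl⟩
  exact ⟨c • v, by simp only [mulVecLin_apply, smul_mulVec, mulVec_smul]⟩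

end Rank

section Trace

variable {m n : Type*} [Fintype m] [Fintype n]

theorem re_trace_le_re_trace_of_le {A B : Matrix m m ℂ} (h : A ≤ B) :
    A.trace.re ≤ B.trace.re := by
  have := (Complex.le_def.mp (le_iff.mp h).trace_nonneg).1
  rw [trace_sub, Complex.sub_re, Complex.zero_re] at this
  linarith

theorem two_mul_re_trace_conjTranspose_mul_le (A B : Matrix m n ℂ) :
    2 * (Aᴴ * B).trace.re ≤ (Aᴴ * A).trace.re + (Bᴴ * B).trace.re := by
  have h := (Complex.le_def.mp (posSemidef_conjTranspose_mul_self (A - B)).trace_nonneg).1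
  have hBA : (Bᴴ * A).trace.re = (Aᴴ * B).trace.re := by
    rw [← conjTranspose_conjTranspose A, ← conjTranspose_mul, trace_conjTranspose,
      conjTranspose_conjTranspose]
    exact Complex.conj_re _
  simp only [conjTranspose_sub, Matrix.sub_mul, Matrix.mul_sub, trace_sub, Complex.sub_re,
    Complex.zero_re] at h
  linarith

end Trace

section Contraction

variable {m n : Type*} [Fintype m] [DecidableEq m] [Fintype n]

theorem cfc_mul_cfc (f g : ℝ → ℝ) (A : Matrix m m ℂ) :
    cfc f A * cfc g A = cfc (fun x => f x * g x) A :=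
  (cfc_mul f g A (finite_real_spectrum.continuousOn _) (finite_real_spectrum.continuousOn _)).symm

/-- Douglas' factorization lemma. -/
theorem exists_eq_mul_of_mul_conjTranspose_le {P : Matrix m m ℂ} (hP : 0 ≤ P)
    {Y : Matrix m n ℂ} (hY : Y * Yᴴ ≤ P * P) :
    ∃ W : Matrix m n ℂ, Y = P * W ∧ W * Wᴴ ≤ 1 := by
  have hPid : P = cfc (fun x : ℝ => x) P := (cfc_id' ℝ P hP.isSelfAdjoint).symm
  -- `P⁺ := cfc (·⁻¹) P` is the Moore–Penrose inverse and `E = P P⁺`, `F = 1 - E` the projections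
  -- onto the range and the kernel of `P`.
  set E := cfc (fun x : ℝ => x * x⁻¹) P
  set F := cfc (fun x : ℝ => 1 - x * x⁻¹) P
  set P' := cfc (fun x : ℝ => x⁻¹) P
  have hP' : P'ᴴ = P' := (cfc_predicate _ P : IsSelfAdjoint P')
  have hF : Fᴴ = F := (cfc_predicate _ P : IsSelfAdjoint F)
  have hEF : E + F = 1 := by
    rw [← cfc_add (a := P) _ _ (finite_real_spectrum.continuousOn _)
      (finite_real_spectrum.continuousOn _), ← cfc_const_one ℝ P hP.isSelfAdjoint]
    congr! 2 with x
    ring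
  have hFY : F * Y = 0 := by
    rw [← self_mul_conjTranspose_eq_zero]
    refine le_antisymm ?_ (posSemidef_self_mul_conjTranspose _).nonneg
    calc F * Y * (F * Y)ᴴ = star F * (Y * Yᴴ) * F := by
          rw [conjTranspose_mul, star_eq_conjTranspose, hF, Matrix.mul_assoc, Matrix.mul_assoc,
            Matrix.mul_assoc]
      _ ≤ star F * (P * P) * F := star_left_conjugate_le_conjugate hY F
      _ = 0 := by
          rw [star_eq_conjTranspose, hF, hPid, cfc_mul_cfc, cfc_mul_cfc, cfc_mul_cfc,
            ← cfc_const_zero ℝ P]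
          congr! 2 with x
          by_cases hx : x = 0 <;> simp [hx]
  refine ⟨P' * Y, ?_, ?_⟩
  · calc Y = E * Y + F * Y := by rw [← Matrix.add_mul, hEF, Matrix.one_mul]
      _ = P * (P' * Y) := by rw [hFY, add_zero, ← Matrix.mul_assoc, hPid, cfc_mul_cfc]
  · calc P' * Y * (P' * Y)ᴴ = star P' * (Y * Yᴴ) * P' := by
          rw [conjTranspose_mul, star_eq_conjTranspose, hP', Matrix.mul_assoc, Matrix.mul_assoc,
            Matrix.mul_assoc]
      _ ≤ star P' * (P * P) * P' := star_left_conjugate_le_conjugate hY P'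
      _ = E := by
          rw [star_eq_conjTranspose, hP', hPid, cfc_mul_cfc, cfc_mul_cfc, cfc_mul_cfc]
          congr! 2 with x
          by_cases hx : x = 0 <;> field_simp
      _ ≤ 1 := cfc_le_one _ _ fun x _ => by by_cases hx : x = 0 <;> simp [hx]

theorem re_trace_conjTranspose_mul_mul_le {Q : Matrix m m ℂ} (hQ : 0 ≤ Q) {V W : Matrix m n ℂ}
    (hV : V * Vᴴ ≤ 1) (hW : W * Wᴴ ≤ 1) : (Wᴴ * Q * V).trace.re ≤ Q.trace.re := by
  -- AM–GM for the pairing `(A, B) ↦ Re tr (Aᴴ B)` of `A = √Q W` and `B = √Q V`.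
  set S := CFC.sqrt Q
  have hSsa : IsSelfAdjoint S := (CFC.sqrt_nonneg Q).isSelfAdjoint
  have hS : Sᴴ = S := hSsa
  have hSS : S * S = Q := CFC.sqrt_mul_sqrt_self Q hQ
  have hcontr (U : Matrix m n ℂ) (hU : U * Uᴴ ≤ 1) :
      ((S * U)ᴴ * (S * U)).trace.re ≤ Q.trace.re := by
    rw [trace_mul_comm, conjTranspose_mul, hS, Matrix.mul_assoc, ← Matrix.mul_assoc U,
      ← Matrix.mul_assoc, ← hSS]
    simpa only [mul_one] using re_trace_le_re_trace_of_le (hSsa.conjugate_le_conjugate hU)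
  have hWV : (S * W)ᴴ * (S * V) = Wᴴ * Q * V := by
    rw [conjTranspose_mul, hS, Matrix.mul_assoc, ← Matrix.mul_assoc S, hSS, Matrix.mul_assoc]
  have h := two_mul_re_trace_conjTranspose_mul_le (S * W) (S * V)
  rw [hWV] at h
  linarith [hcontr V hV, hcontr W hW]

theorem re_trace_conjTranspose_mul_le_re_trace_sqrt {σ ρ : Matrix m m ℂ} {X Y : Matrix m n ℂ}
    (hX : X * Xᴴ ≤ σ) (hY : Y * Yᴴ ≤ ρ) :
    (Xᴴ * Y).trace.re ≤ (CFC.sqrt (CFC.sqrt ρ * σ * CFC.sqrt ρ)).trace.re := by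
  have hσ : 0 ≤ σ := (posSemidef_self_mul_conjTranspose X).nonneg.trans hX
  have hρ : 0 ≤ ρ := (posSemidef_self_mul_conjTranspose Y).nonneg.trans hY
  set R := CFC.sqrt ρ
  have hRsa : IsSelfAdjoint R := (CFC.sqrt_nonneg ρ).isSelfAdjoint
  have hR : Rᴴ = R := hRsa
  have hRσR : 0 ≤ R * σ * R := hRsa.conjugate_nonneg hσ
  have hYR : Y * Yᴴ ≤ R * R := by rwa [CFC.sqrt_mul_sqrt_self ρ hρ]
  obtain ⟨W, hYW, hW⟩ := exists_eq_mul_of_mul_conjTranspose_le (CFC.sqrt_nonneg ρ) hYR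
  have hRXQ : (R * X) * (R * X)ᴴ ≤ CFC.sqrt (R * σ * R) * CFC.sqrt (R * σ * R) :=
    calc (R * X) * (R * X)ᴴ = R * (X * Xᴴ) * R := by
          rw [conjTranspose_mul, hR, Matrix.mul_assoc, Matrix.mul_assoc, Matrix.mul_assoc]
      _ ≤ R * σ * R := hRsa.conjugate_le_conjugate hX
      _ = _ := (CFC.sqrt_mul_sqrt_self _ hRσR).symm
  obtain ⟨V, hRX, hV⟩ :=
    exists_eq_mul_of_mul_conjTranspose_le (CFC.sqrt_nonneg (R * σ * R)) hRXQ
  have hXY : Xᴴ * (R * W) = Vᴴ * CFC.sqrt (R * σ * R) * W := by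
    have hXR : Xᴴ * R = (R * X)ᴴ := by rw [conjTranspose_mul, hR]
    have hQ : (CFC.sqrt (R * σ * R))ᴴ = CFC.sqrt (R * σ * R) :=
      (CFC.sqrt_nonneg (R * σ * R)).isSelfAdjoint
    rw [← Matrix.mul_assoc, hXR, hRX, conjTranspose_mul, hQ]
  rw [hYW]
  change (Xᴴ * (R * W)).trace.re ≤ _
  rw [hXY]
  exact re_trace_conjTranspose_mul_mul_le (CFC.sqrt_nonneg (R * σ * R)) hW hV

theorem cfc_inv_sqrt_mul_self {M : Matrix m m ℂ} (hM : 0 ≤ M) :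
    cfc (fun x : ℝ => (√x)⁻¹) M * M = CFC.sqrt M := by
  nth_rw 2 [← cfc_id' ℝ M hM.isSelfAdjoint]
  rw [cfc_mul_cfc, CFC.sqrt_eq_real_sqrt M hM, cfcₙ_eq_cfc (hf0 := Real.sqrt_zero)]
  refine cfc_congr fun x _ => ?_
  rcases le_or_gt x 0 with hx | hx
  · simp [Real.sqrt_eq_zero_of_nonpos hx]
  · rw [inv_mul_eq_div, Real.div_sqrt]

theorem isStarProjection_mul_cfc_inv_sqrt_mul_conjTranspose (A : Matrix n m ℂ) :
    IsStarProjection (A * cfc (fun x : ℝ => (√x)⁻¹) (Aᴴ * A) *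
      cfc (fun x : ℝ => (√x)⁻¹) (Aᴴ * A) * Aᴴ) := by
  set M := Aᴴ * A
  have hMid : M = cfc (fun x : ℝ => x) M :=
    (cfc_id' ℝ M (posSemidef_conjTranspose_mul_self A).1).symm
  set T := cfc (fun x : ℝ => (√x)⁻¹) M
  have hT : Tᴴ = T := (cfc_predicate _ _ : IsSelfAdjoint T)
  have hTT : T * T * M * T * T = T * T := by
    rw [hMid, cfc_mul_cfc, cfc_mul_cfc, cfc_mul_cfc, cfc_mul_cfc]
    refine cfc_congr fun x _ => ?_
    rcases le_or_gt x 0 with hx | hx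
    · simp [Real.sqrt_eq_zero_of_nonpos hx]
    · have hs := (Real.sqrt_pos.mpr hx).ne'
      field_simp
      rw [Real.sq_sqrt hx.le]
  refine ⟨?_, ?_⟩
  · calc _ = A * (T * T * M * T * T) * Aᴴ := by simp only [M, Matrix.mul_assoc]
      _ = _ := by rw [hTT]; simp only [Matrix.mul_assoc]
  · simp only [IsSelfAdjoint, star_eq_conjTranspose, conjTranspose_mul,
      conjTranspose_conjTranspose, hT, Matrix.mul_assoc]

theorem exists_re_trace_conjTranspose_mul_eq_re_trace_sqrt {σ ρ : Matrix m m ℂ} (hσ : 0 ≤ σ)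
    (hρ : 0 ≤ ρ) : ∃ X Y : Matrix m m ℂ, X * Xᴴ ≤ σ ∧ Y * Yᴴ ≤ ρ ∧
      (Xᴴ * Y).trace.re = (CFC.sqrt (CFC.sqrt ρ * σ * CFC.sqrt ρ)).trace.re := by
  set S := CFC.sqrt σ
  set R := CFC.sqrt ρ
  have hS : Sᴴ = S := (CFC.sqrt_nonneg σ).isSelfAdjoint
  have hR : Rᴴ = R := (CFC.sqrt_nonneg ρ).isSelfAdjoint
  have hSS : S * S = σ := CFC.sqrt_mul_sqrt_self σ hσ
  have hM : (S * R)ᴴ * (S * R) = R * σ * R := by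
    rw [conjTranspose_mul, hS, hR, Matrix.mul_assoc, ← Matrix.mul_assoc S, hSS,
      ← Matrix.mul_assoc]
  -- `S R T` is the partial isometry in the polar decomposition of `S R`.
  set T := cfc (fun x : ℝ => (√x)⁻¹) ((S * R)ᴴ * (S * R))
  have hT : Tᴴ = T := (cfc_predicate _ _ : IsSelfAdjoint T)
  refine ⟨S * (S * R) * T, R, ?_, ?_, ?_⟩
  · calc S * (S * R) * T * (S * (S * R) * T)ᴴ = S * (S * R * T * T * (S * R)ᴴ) * S := by
          simp only [conjTranspose_mul, hS, hT, Matrix.mul_assoc]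
      _ ≤ S * 1 * S := (CFC.sqrt_nonneg σ).isSelfAdjoint.conjugate_le_conjugate
          (isStarProjection_mul_cfc_inv_sqrt_mul_conjTranspose (S * R)).le_one
      _ = σ := by rw [Matrix.mul_one, hSS]
  · rw [hR, CFC.sqrt_mul_sqrt_self ρ hρ]
  · have hXY : (S * (S * R) * T)ᴴ * R = T * ((S * R)ᴴ * (S * R)) := by
      simp only [conjTranspose_mul, hS, hR, hT, Matrix.mul_assoc]
    rw [hXY, cfc_inv_sqrt_mul_self (posSemidef_conjTranspose_mul_self _).nonneg, hM]

theorem PosSemidef.cfcSqrt_eq {A : Matrix m m ℂ} (hA : A.PosSemidef) :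
    CFC.sqrt A = hA.1.eigenvectorUnitary.1 *
      diagonal (((↑) : ℝ → ℂ) ∘ (√·) ∘ hA.1.eigenvalues) *
        (star hA.1.eigenvectorUnitary : Matrix m m ℂ) := by
  rw [CFC.sqrt_eq_real_sqrt A hA.nonneg, cfcₙ_eq_cfc, hA.1.cfc_eq, IsHermitian.cfc,
    Unitary.conjStarAlgAut_apply]
  rfl

end Contraction

section BlockRow

variable {m n κ α : Type*} [Fintype n] [Fintype κ] [CommSemiring α] [StarRing α]

def blockRow (X : κ → Matrix m n α) : Matrix m (n × κ) α :=
  of fun i jk => X jk.2 i jk.1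

theorem blockRow_mul_conjTranspose_blockRow (X Y : κ → Matrix m n α) :
    blockRow X * (blockRow Y)ᴴ = ∑ k, X k * (Y k)ᴴ := by
  ext i i'
  simp only [blockRow, mul_apply, conjTranspose_apply, of_apply, Fintype.sum_prod_type, sum_apply]
  exact Finset.sum_comm

theorem trace_conjTranspose_blockRow_mul_blockRow [Fintype m] (X Y : κ → Matrix m n α) :
    ((blockRow X)ᴴ * blockRow Y).trace = ∑ k, ((X k)ᴴ * Y k).trace := by
  simp only [trace, diag, blockRow, mul_apply, conjTranspose_apply, of_apply,
    Fintype.sum_prod_type]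
  exact Finset.sum_comm

end BlockRow

end Matrix

theorem Real.sqrt_one_sub_sq_le_iff {F ε : ℝ} (hF : 0 ≤ F) (hε : 0 ≤ ε) :
    √(1 - F ^ 2) ≤ ε ↔ √(1 - ε ^ 2) ≤ F := by
  rw [Real.sqrt_le_left hε, Real.sqrt_le_left hF]
  constructor <;> intro h <;> linarith

namespace QIT

open Matrix
open scoped MatrixOrder

variable {ι : Type*} [Fintype ι]

theorem isSubnormalized_sum_smul {κ : Type*} [Fintype κ] {p : κ → ℝ} (hp : ∀ k, 0 ≤ p k)
    (hp1 : ∑ k, p k = 1) {σ : κ → Matrix ι ι ℂ} (hσ : ∀ k, IsSubnormalized (σ k)) :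
    IsSubnormalized (∑ k, p k • σ k) := by
  refine ⟨posSemidef_sum _ fun k _ => (hσ k).1.smul (hp k), ?_⟩
  simp only [trace_sum, trace_smul, Complex.re_sum, Complex.smul_re, smul_eq_mul]
  calc ∑ k, p k * (σ k).trace.re ≤ ∑ k, p k := 
        Finset.sum_le_sum fun k _ => mul_le_of_le_one_right (hp k) (hσ k).2
    _ = 1 := hp1

theorem isDensity_sum_smul {κ : Type*} [Fintype κ] {p : κ → ℝ} (hp : ∀ k, 0 ≤ p k)
    (hp1 : ∑ k, p k = 1) {ρ : κ → Matrix ι ι ℂ} (hρ : ∀ k, IsDensity (ρ k)) :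
    IsDensity (∑ k, p k • ρ k) := by
  refine ⟨posSemidef_sum _ fun k _ => (hρ k).1.smul (hp k), ?_⟩
  simp only [trace_sum, trace_smul, (hρ _).2]
  rw [← Finset.sum_smul, hp1, one_smul]

theorem H0_nonneg (σ : Matrix ι ι ℂ) : 0 ≤ H0 σ :=
  div_nonneg (Real.log_natCast_nonneg _) (Real.log_nonneg one_le_two)

theorem H0_sum_smul_le {κ : Type*} [Fintype κ] [Nonempty κ] (c : κ → ℝ) (σ : κ → Matrix ι ι ℂ) :
    H0 (∑ k, c k • σ k) ≤ (⨆ k, H0 (σ k)) + Real.logb 2 (Fintype.card κ) := by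
  obtain ⟨k₀, hk₀⟩ := Finite.exists_max fun k => (σ k).rank
  have hsup : H0 (σ k₀) ≤ ⨆ k, H0 (σ k) :=
    le_ciSup (f := fun k => H0 (σ k)) (Set.finite_range _).bddAbove k₀
  have hrank : (∑ k, c k • σ k).rank ≤ Fintype.card κ * (σ k₀).rank :=
    calc (∑ k, c k • σ k).rank ≤ ∑ k, (c k • σ k).rank := rank_sum_le _ _
      _ ≤ ∑ _k : κ, (σ k₀).rank := Finset.sum_le_sum fun k _ => (rank_smul_le _ _).trans (hk₀ k)
      _ = Fintype.card κ * (σ k₀).rank := by rw [Finset.sum_const, Finset.card_univ, smul_eq_mul]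
  rcases Nat.eq_zero_or_pos (∑ k, c k • σ k).rank with h0 | hpos
  · rw [H0, h0, Nat.cast_zero, Real.logb_zero]
    have hcard : 0 ≤ Real.logb 2 (Fintype.card κ) :=
      Real.logb_nonneg one_lt_two (Nat.one_le_cast.mpr Fintype.card_pos)
    linarith [H0_nonneg (σ k₀)]
  · have hr : 0 < (σ k₀).rank := Nat.pos_of_mul_pos_left (hpos.trans_le hrank)
    calc H0 (∑ k, c k • σ k) ≤ Real.logb 2 ((Fintype.card κ : ℝ) * (σ k₀).rank) :=
          Real.logb_le_logb_of_le one_lt_two (by exact_mod_cast hpos) (by exact_mod_cast hrank)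
      _ = H0 (σ k₀) + Real.logb 2 (Fintype.card κ) := by
          rw [Real.logb_mul (by positivity) (by positivity), H0, add_comm]
      _ ≤ (⨆ k, H0 (σ k)) + Real.logb 2 (Fintype.card κ) := by linarith

variable [DecidableEq ι]

theorem msqrt_eq_cfcSqrt {A : Matrix ι ι ℂ} (hA : A.PosSemidef) : msqrt A = CFC.sqrt A := by
  rw [msqrt, dif_pos hA, hA.cfcSqrt_eq]

theorem traceNorm_eq (A : Matrix ι ι ℂ) : traceNorm A = (CFC.sqrt (Aᴴ * A)).trace.re := by
  rw [traceNorm, (posSemidef_conjTranspose_mul_self A).cfcSqrt_eq]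

theorem fidelity_eq {σ ρ : Matrix ι ι ℂ} (hσ : σ.PosSemidef) (hρ : ρ.PosSemidef) :
    fidelity σ ρ = (CFC.sqrt (CFC.sqrt ρ * σ * CFC.sqrt ρ)).trace.re := by
  have hS : (CFC.sqrt σ)ᴴ = CFC.sqrt σ := (CFC.sqrt_nonneg σ).isSelfAdjoint
  have hR : (CFC.sqrt ρ)ᴴ = CFC.sqrt ρ := (CFC.sqrt_nonneg ρ).isSelfAdjoint
  rw [fidelity, msqrt_eq_cfcSqrt hσ, msqrt_eq_cfcSqrt hρ, traceNorm_eq, conjTranspose_mul, hS, hR,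
    Matrix.mul_assoc, ← Matrix.mul_assoc (CFC.sqrt σ), CFC.sqrt_mul_sqrt_self σ hσ.nonneg,
    ← Matrix.mul_assoc]

theorem fidelity_nonneg (σ ρ : Matrix ι ι ℂ) : 0 ≤ fidelity σ ρ := by
  rw [fidelity, traceNorm_eq]
  simpa using re_trace_le_re_trace_of_le (CFC.sqrt_nonneg (A := Matrix ι ι ℂ) _)

theorem fidelity_self {ρ : Matrix ι ι ℂ} (hρ : ρ.PosSemidef) : fidelity ρ ρ = ρ.trace.re := by
  have hRR := CFC.sqrt_mul_sqrt_self ρ hρ.nonneg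
  have h : CFC.sqrt ρ * ρ * CFC.sqrt ρ = ρ * ρ :=
    calc CFC.sqrt ρ * ρ * CFC.sqrt ρ = CFC.sqrt ρ * (CFC.sqrt ρ * CFC.sqrt ρ) * CFC.sqrt ρ := by
          rw [hRR]
      _ = (CFC.sqrt ρ * CFC.sqrt ρ) * (CFC.sqrt ρ * CFC.sqrt ρ) := by simp only [mul_assoc]
      _ = ρ * ρ := by rw [hRR]
  rw [fidelity_eq hρ hρ, h, CFC.sqrt_mul_self ρ hρ.nonneg]

theorem re_trace_le_fidelity {μ : Type*} [Fintype μ] {σ ρ : Matrix ι ι ℂ} {X Y : Matrix ι μ ℂ}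
    (hX : X * Xᴴ ≤ σ) (hY : Y * Yᴴ ≤ ρ) : (Xᴴ * Y).trace.re ≤ fidelity σ ρ := by
  rw [fidelity_eq ((posSemidef_self_mul_conjTranspose X).nonneg.trans hX).posSemidef
    ((posSemidef_self_mul_conjTranspose Y).nonneg.trans hY).posSemidef]
  exact re_trace_conjTranspose_mul_le_re_trace_sqrt hX hY

theorem exists_re_trace_eq_fidelity {σ ρ : Matrix ι ι ℂ} (hσ : σ.PosSemidef) (hρ : ρ.PosSemidef) :
    ∃ X Y : Matrix ι ι ℂ, X * Xᴴ ≤ σ ∧ Y * Yᴴ ≤ ρ ∧ (Xᴴ * Y).trace.re = fidelity σ ρ := by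
  rw [fidelity_eq hσ hρ]
  exact exists_re_trace_conjTranspose_mul_eq_re_trace_sqrt hσ.nonneg hρ.nonneg

theorem sum_mul_fidelity_le_fidelity_sum {κ : Type*} [Fintype κ] {p : κ → ℝ} (hp : ∀ k, 0 ≤ p k)
    {σ ρ : κ → Matrix ι ι ℂ} (hσ : ∀ k, (σ k).PosSemidef) (hρ : ∀ k, (ρ k).PosSemidef) :
    ∑ k, p k * fidelity (σ k) (ρ k) ≤ fidelity (∑ k, p k • σ k) (∑ k, p k • ρ k) := by
  choose X Y hX hY hXY using fun k => exists_re_trace_eq_fidelity (hσ k) (hρ k)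
  have hweight (k : κ) (A B : Matrix ι ι ℂ) : (√(p k) • A) * (√(p k) • B) = p k • (A * B) := by
    rw [Matrix.smul_mul, Matrix.mul_smul, smul_smul, Real.mul_self_sqrt (hp k)]
  have hle (Z τ : κ → Matrix ι ι ℂ) (hZ : ∀ k, Z k * (Z k)ᴴ ≤ τ k) :
      blockRow (fun k => √(p k) • Z k) * (blockRow (fun k => √(p k) • Z k))ᴴ ≤ ∑ k, p k • τ k := by
    rw [blockRow_mul_conjTranspose_blockRow]
    exact Finset.sum_le_sum fun k _ => by
      rw [conjTranspose_smul, star_trivial, hweight]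
      exact smul_le_smul_of_nonneg_left (hZ k) (hp k)
  calc ∑ k, p k * fidelity (σ k) (ρ k)
      = ((blockRow fun k => √(p k) • X k)ᴴ * blockRow fun k => √(p k) • Y k).trace.re := by
        simp only [trace_conjTranspose_blockRow_mul_blockRow, conjTranspose_smul, star_trivial,
          hweight, trace_smul, Complex.re_sum, Complex.smul_re, hXY, smul_eq_mul]
    _ ≤ _ := re_trace_le_fidelity (hle X σ hX) (hle Y ρ hY)

theorem purifiedDist_le_iff {σ ρ : Matrix ι ι ℂ} (hρ : ρ.trace = 1) {ε : ℝ} (hε : 0 ≤ ε) :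
    purifiedDist σ ρ ≤ ε ↔ √(1 - ε ^ 2) ≤ fidelity σ ρ := by
  rw [purifiedDist, genFid, hρ, Complex.one_re, sub_self, mul_zero, Real.sqrt_zero, add_zero]
  exact Real.sqrt_one_sub_sq_le_iff (fidelity_nonneg σ ρ) hε

theorem smoothH0_le {ε : ℝ} {σ ρ : Matrix ι ι ℂ} (hσ : IsSubnormalized σ)
    (hσρ : purifiedDist σ ρ ≤ ε) : smoothH0 ε ρ ≤ H0 σ :=
  csInf_le ⟨0, by rintro _ ⟨τ, -, -, rfl⟩; exact H0_nonneg τ⟩ ⟨σ, hσ, hσρ, rfl⟩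

theorem exists_H0_eq_smoothH0 {ε : ℝ} (hε : 0 ≤ ε) {ρ : Matrix ι ι ℂ} (hρ : IsDensity ρ) :
    ∃ σ, IsSubnormalized σ ∧ purifiedDist σ ρ ≤ ε ∧ H0 σ = smoothH0 ε ρ := by
  have hne : {x : ℝ | ∃ σ : Matrix ι ι ℂ,
      IsSubnormalized σ ∧ purifiedDist σ ρ ≤ ε ∧ x = H0 σ}.Nonempty := by
    refine ⟨H0 ρ, ρ, ⟨hρ.1, by rw [hρ.2, Complex.one_re]⟩, ?_, rfl⟩
    rw [purifiedDist_le_iff hρ.2 hε, fidelity_self hρ.1, hρ.2, Complex.one_re]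
    exact Real.sqrt_le_one.mpr (by nlinarith)
  have hfin : {x : ℝ | ∃ σ : Matrix ι ι ℂ,
      IsSubnormalized σ ∧ purifiedDist σ ρ ≤ ε ∧ x = H0 σ}.Finite := by
    refine ((Set.finite_Iic (Fintype.card ι)).image fun r : ℕ => Real.logb 2 r).subset ?_
    rintro _ ⟨σ, -, -, rfl⟩
    exact ⟨σ.rank, σ.rank_le_card_width, rfl⟩
  obtain ⟨σ, hσ, hσρ, hH0⟩ := hne.csInf_mem hfin
  exact ⟨σ, hσ, hσρ, hH0.symm⟩

/-- Quasi-convexity of the smooth zero-Rényi entropy. -/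
theorem smoothH0_quasiconvex {N : ℕ} (hN : 0 < N) (ε : ℝ) (hε : 0 ≤ ε)
    (p : Fin N → ℝ) (ρ : Fin N → Matrix ι ι ℂ)
    (hp : ∀ j, 0 < p j) (hp1 : ∑ j, p j = 1) (hρ : ∀ j, IsDensity (ρ j)) :
    smoothH0 ε (∑ j, p j • ρ j) ≤ (⨆ j, smoothH0 ε (ρ j)) + Real.logb 2 N := by
  have : Nonempty (Fin N) := ⟨⟨0, hN⟩⟩
  have hp0 : ∀ j, 0 ≤ p j := fun j => (hp j).le
  choose σ hσ hσρ hH0 using fun j => exists_H0_eq_smoothH0 hε (hρ j)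
  have hfid : √(1 - ε ^ 2) ≤ fidelity (∑ j, p j • σ j) (∑ j, p j • ρ j) :=
    calc √(1 - ε ^ 2) = ∑ j, p j * √(1 - ε ^ 2) := by rw [← Finset.sum_mul, hp1, one_mul]
      _ ≤ ∑ j, p j * fidelity (σ j) (ρ j) := Finset.sum_le_sum fun j _ =>
          mul_le_mul_of_nonneg_left ((purifiedDist_le_iff (hρ j).2 hε).1 (hσρ j)) (hp0 j)
      _ ≤ _ := sum_mul_fidelity_le_fidelity_sum hp0 (fun j => (hσ j).1) fun j => (hρ j).1
  calc smoothH0 ε (∑ j, p j • ρ j) ≤ H0 (∑ j, p j • σ j) :=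
        smoothH0_le (isSubnormalized_sum_smul hp0 hp1 hσ)
          ((purifiedDist_le_iff (isDensity_sum_smul hp0 hp1 hρ).2 hε).2 hfid)
    _ ≤ (⨆ j, H0 (σ j)) + Real.logb 2 N := by simpa using H0_sum_smul_le p σ
    _ = (⨆ j, smoothH0 ε (ρ j)) + Real.logb 2 N := by simp only [hH0]

end QIT
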